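/- Let G = ⟨v₁, v₂, h | [v₁,h], [v₂,h], [v₁,v₂]h^{-b}⟩ with b a positive integer, and let φ : G → ℤ/2 be the homomorphism determined by φ(v₁) = 1, φ(v₂) = 0, φ(h) = 0. Then the kernel of φ is isomorphic to the group ⟨w₁, w₂, k | [w₁,k], [w₂,k], [w₁,w₂]k^{-2b}⟩, i.e. to the fundamental group of M_T(2b). -/

import Mathlib

/-!
`π₁(M_T(b))` is the integral Heisenberg-type group `ℤ³` with product
`(x, y, z) (x', y', z') = (x + x', y + y', z + z' - b x' y)`: the presentation maps onto it, and the
normal form `v₁ ^ x * v₂ ^ y * h ^ z` gives the inverse, because `h` is central and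
`[v₁ ^ m, v₂ ^ n] = h ^ (b m n)`. In these coordinates a homomorphism `φ` onto `ℤ/n` with
`φ(v₁) = 1`, `φ(v₂) = φ(h) = 0` reads off `x mod n`, so its kernel is
`{n ∣ x}`, the image of the injective homomorphism `(x, y, z) ↦ (n x, y, z)` from the group
with twist `n b`.
-/

/-- Relations of the fundamental group of `M_T(b)`:
generators `v₁ = 0`, `v₂ = 1`, `h = 2`; relations `[v₁,h]`, `[v₂,h]`, `[v₁,v₂]h^{-b}`. -/
def relsT (b : ℤ) : Set (FreeGroup (Fin 3)) :=
  { .of 0 * .of 2 * (.of 0)⁻¹ * (.of 2)⁻¹,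
    .of 1 * .of 2 * (.of 1)⁻¹ * (.of 2)⁻¹,
    .of 0 * .of 1 * (.of 0)⁻¹ * (.of 1)⁻¹ * (.of 2) ^ (-b) }

open scoped commutatorElement

section CentralCommutator

variable {G : Type*} [Group G] {a b c : G}

theorem commutatorElement_zpow_right_eq (hc : ∀ g, Commute c g) (hab : ⁅a, b⁆ = c) (n : ℤ) :
    ⁅a, b ^ n⁆ = c ^ n := by
  have hconj : SemiconjBy a b (c * b) := by
    rw [SemiconjBy, ← hab, commutatorElement_def, inv_mul_cancel_right, inv_mul_cancel_right]
  rw [commutatorElement_def, (hconj.zpow_right n).eq, (hc b).mul_zpow, mul_inv_cancel_right,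
    mul_inv_cancel_right]

theorem commutatorElement_zpow_zpow_eq (hc : ∀ g, Commute c g) (hab : ⁅a, b⁆ = c) (m n : ℤ) :
    ⁅a ^ m, b ^ n⁆ = c ^ (m * n) := by
  have hcn : ∀ g, Commute (c ^ n)⁻¹ g := fun g => ((hc g).zpow_left n).inv_left
  have hba : ⁅b ^ n, a⁆ = (c ^ n)⁻¹ := by
    rw [← commutatorElement_inv, commutatorElement_zpow_right_eq hc hab]
  rw [← commutatorElement_inv, commutatorElement_zpow_right_eq hcn hba, inv_zpow, inv_inv,
    ← zpow_mul, mul_comm]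

end CentralCommutator

namespace MT

@[ext] structure Heis (b : ℤ) where
  x : ℤ
  y : ℤ
  z : ℤ

namespace Heis

variable {b : ℤ}

instance : Mul (Heis b) := ⟨fun u v => ⟨u.x + v.x, u.y + v.y, u.z + v.z - b * v.x * u.y⟩⟩
instance : One (Heis b) := ⟨⟨0, 0, 0⟩⟩
instance : Inv (Heis b) := ⟨fun u => ⟨-u.x, -u.y, -u.z - b * u.x * u.y⟩⟩

@[simp] lemma mul_x (u v : Heis b) : (u * v).x = u.x + v.x := rfl
@[simp] lemma mul_y (u v : Heis b) : (u * v).y = u.y + v.y := rfl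
@[simp] lemma mul_z (u v : Heis b) : (u * v).z = u.z + v.z - b * v.x * u.y := rfl
@[simp] lemma one_x : (1 : Heis b).x = 0 := rfl
@[simp] lemma one_y : (1 : Heis b).y = 0 := rfl
@[simp] lemma one_z : (1 : Heis b).z = 0 := rfl
@[simp] lemma inv_x (u : Heis b) : u⁻¹.x = -u.x := rfl
@[simp] lemma inv_y (u : Heis b) : u⁻¹.y = -u.y := rfl
@[simp] lemma inv_z (u : Heis b) : u⁻¹.z = -u.z - b * u.x * u.y := rfl

instance : Group (Heis b) :=
  Group.ofLeftAxioms
    (fun u v w => by ext <;> simp only [mul_x, mul_y, mul_z] <;> ring)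
    (fun u => by ext <;> simp)
    (fun u => by
      ext <;> simp only [mul_x, mul_y, mul_z, inv_x, inv_y, inv_z, one_x, one_y, one_z] <;> ring)

lemma mk_zpow {x y z : ℤ} (hxy : x * y = 0) (m : ℤ) :
    (⟨x, y, z⟩ : Heis b) ^ m = ⟨m * x, m * y, m * z⟩ := by
  induction m using Int.induction_on with
  | zero => ext <;> simp
  | succ n ih =>
    rw [zpow_add_one, ih]
    ext <;> simp only [mul_x, mul_y, mul_z]
    exacts [by ring, by ring, by linear_combination (-b * n) * hxy]
  | pred n ih =>
    rw [zpow_sub_one, ih]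
    ext <;> simp only [mul_x, mul_y, mul_z, inv_x, inv_y, inv_z]
    exacts [by ring, by ring, by linear_combination (-b * (n + 1)) * hxy]

end Heis

variable {b : ℤ}

def v₁ : PresentedGroup (relsT b) := .of 0
def v₂ : PresentedGroup (relsT b) := .of 1
def fiber : PresentedGroup (relsT b) := .of 2

lemma v₁_mul_fiber : (v₁ : PresentedGroup (relsT b)) * fiber = fiber * v₁ :=
  PresentedGroup.mk_eq_mk_of_mul_inv_mem (by simp [relsT, mul_assoc])

lemma v₂_mul_fiber : (v₂ : PresentedGroup (relsT b)) * fiber = fiber * v₂ :=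
  PresentedGroup.mk_eq_mk_of_mul_inv_mem (by simp [relsT, mul_assoc])

lemma commutatorElement_v₁_v₂ :
    ⁅(v₁ : PresentedGroup (relsT b)), (v₂ : PresentedGroup (relsT b))⁆ = fiber ^ b :=
  PresentedGroup.mk_eq_mk_of_mul_inv_mem (by simp [relsT, zpow_neg])

lemma fiber_commute (g : PresentedGroup (relsT b)) : Commute fiber g := by
  suffices g ∈ Subgroup.centralizer {fiber} from
    (Subgroup.mem_centralizer_singleton_iff.mp this).symm
  refine PresentedGroup.generated_by _ _ (fun i => ?_) g
  rw [Subgroup.mem_centralizer_singleton_iff]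
  fin_cases i
  exacts [v₁_mul_fiber, v₂_mul_fiber, rfl]

lemma v₂_zpow_mul_v₁_zpow (m n : ℤ) :
    (v₂ : PresentedGroup (relsT b)) ^ n * v₁ ^ m = v₁ ^ m * v₂ ^ n * fiber ^ (-(b * m * n)) := by
  have hcomm := commutatorElement_zpow_zpow_eq (fun g => (fiber_commute g).zpow_left b)
    commutatorElement_v₁_v₂ m n
  rw [commutatorElement_def, mul_inv_eq_iff_eq_mul, mul_inv_eq_iff_eq_mul, ← zpow_mul,
    ← mul_assoc] at hcomm
  rw [hcomm, mul_assoc _ (v₂ ^ n), ((fiber_commute _).zpow_left _).eq, zpow_neg,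
    mul_inv_cancel_right]

def ofHeis : Heis b →* PresentedGroup (relsT b) where
  toFun u := v₁ ^ u.x * v₂ ^ u.y * fiber ^ u.z
  map_one' := by simp
  map_mul' u v := by
    have hf : ∀ k : ℤ, ∀ g : PresentedGroup (relsT b), Commute (fiber ^ k) g :=
      fun k g => (fiber_commute g).zpow_left k
    calc v₁ ^ (u.x + v.x) * v₂ ^ (u.y + v.y) * fiber ^ (u.z + v.z - b * v.x * u.y)
        = v₁ ^ u.x * (v₁ ^ v.x * v₂ ^ u.y * fiber ^ (-(b * v.x * u.y))) * v₂ ^ v.y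
            * (fiber ^ u.z * fiber ^ v.z) := by
          simp only [zpow_add, sub_eq_add_neg, mul_assoc]
          rw [(hf _ (v₂ ^ v.y)).left_comm, ← zpow_add, ← zpow_add, ← zpow_add, ← zpow_add]
          ring_nf
      _ = v₁ ^ u.x * v₂ ^ u.y * fiber ^ u.z * (v₁ ^ v.x * v₂ ^ v.y * fiber ^ v.z) := by
          rw [← v₂_zpow_mul_v₁_zpow, (hf _ _).mul_mul_mul_comm]
          simp only [mul_assoc]

lemma ofHeis_apply (u : Heis b) : ofHeis u = v₁ ^ u.x * v₂ ^ u.y * fiber ^ u.z := rfl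

def heisGen : Fin 3 → Heis b := ![⟨1, 0, 0⟩, ⟨0, 1, 0⟩, ⟨0, 0, 1⟩]

lemma lift_heisGen_rels : ∀ r ∈ relsT b, FreeGroup.lift (heisGen (b := b)) r = 1 := by
  rintro r (rfl | rfl | rfl) <;>
    simp only [map_mul, map_inv, map_zpow, FreeGroup.lift_apply_of] <;>
    ext <;> simp [heisGen, Heis.mk_zpow]

def toHeis : PresentedGroup (relsT b) →* Heis b := PresentedGroup.toGroup lift_heisGen_rels

lemma ofHeis_comp_toHeis : ofHeis.comp toHeis = MonoidHom.id (PresentedGroup (relsT b)) := by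
  refine PresentedGroup.ext fun i => ?_
  fin_cases i <;> simp [toHeis, PresentedGroup.toGroup.of, heisGen, ofHeis_apply, v₁, v₂, fiber]

lemma toHeis_comp_ofHeis : toHeis.comp ofHeis = MonoidHom.id (Heis b) := by
  ext u <;>
    simp [ofHeis_apply, toHeis, v₁, v₂, fiber, PresentedGroup.toGroup.of, heisGen, Heis.mk_zpow]

def equivHeis : PresentedGroup (relsT b) ≃* Heis b :=
  MonoidHom.toMulEquiv toHeis ofHeis ofHeis_comp_toHeis toHeis_comp_ofHeis

lemma ofHeis_injective : Function.Injective (ofHeis (b := b)) := equivHeis.symm.injective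

lemma ofHeis_surjective : Function.Surjective (ofHeis (b := b)) := equivHeis.symm.surjective

def scale (n b : ℤ) : Heis (n * b) →* Heis b where
  toFun u := ⟨n * u.x, u.y, u.z⟩
  map_one' := by ext <;> simp
  map_mul' u v := by ext <;> simp only [Heis.mul_x, Heis.mul_y, Heis.mul_z] <;> ring

lemma scale_injective {n : ℤ} (hn : n ≠ 0) (b : ℤ) : Function.Injective (scale n b) := by
  intro u v huv
  simp only [scale, MonoidHom.coe_mk, OneHom.coe_mk, Heis.mk.injEq, mul_right_inj' hn] at huv
  exact Heis.ext huv.1 huv.2.1 huv.2.2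

lemma mem_range_scale {n b : ℤ} {u : Heis b} : u ∈ (scale n b).range ↔ n ∣ u.x := by
  constructor
  · rintro ⟨v, rfl⟩
    exact dvd_mul_right n v.x
  · rintro ⟨k, hk⟩
    exact ⟨⟨k, u.y, u.z⟩, by ext <;> simp [scale, hk]⟩

section Cover

variable {n : ℕ} {φ : PresentedGroup (relsT b) →* Multiplicative (ZMod n)}

lemma apply_ofHeis (h₁ : φ v₁ = .ofAdd 1) (h₂ : φ v₂ = 1) (h₃ : φ fiber = 1) (u : Heis b) :
    φ (ofHeis u) = .ofAdd (u.x : ZMod n) := by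
  rw [ofHeis_apply, map_mul, map_mul, map_zpow, map_zpow, map_zpow, h₁, h₂, h₃, one_zpow,
    one_zpow, mul_one, mul_one, ← ofAdd_zsmul, zsmul_one]

lemma ker_eq_range_ofHeis_comp_scale (h₁ : φ v₁ = .ofAdd 1) (h₂ : φ v₂ = 1) (h₃ : φ fiber = 1) :
    φ.ker = (ofHeis.comp (scale n b)).range := by
  ext g
  obtain ⟨u, rfl⟩ := ofHeis_surjective g
  rw [MonoidHom.mem_ker, apply_ofHeis h₁ h₂ h₃, ofAdd_eq_one, ZMod.intCast_zmod_eq_zero_iff_dvd,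
    MonoidHom.range_comp, Subgroup.mem_map_iff_mem ofHeis_injective, mem_range_scale]

noncomputable def kerMulEquiv (hn : n ≠ 0) (h₁ : φ v₁ = .ofAdd 1) (h₂ : φ v₂ = 1)
    (h₃ : φ fiber = 1) : φ.ker ≃* PresentedGroup (relsT (n * b)) :=
  have hinj : Function.Injective (ofHeis.comp (scale n b)) :=
    ofHeis_injective.comp (scale_injective (Int.natCast_ne_zero.mpr hn) b)
  (MulEquiv.subgroupCongr (ker_eq_range_ofHeis_comp_scale h₁ h₂ h₃)).trans <|
    (MonoidHom.ofInjective hinj).symm.trans equivHeis.symm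

end Cover

end MT

theorem ker_MT_cover_general (b : ℕ)
    (φ : PresentedGroup (relsT b) →* Multiplicative (ZMod 2))
    (h1 : φ (PresentedGroup.of 0) = Multiplicative.ofAdd 1)
    (h2 : φ (PresentedGroup.of 1) = 1) (h3 : φ (PresentedGroup.of 2) = 1) :
    Nonempty (φ.ker ≃* PresentedGroup (relsT (2 * b))) :=
  ⟨MT.kerMulEquiv two_ne_zero h1 h2 h3⟩

/-- The kernel of the epimorphism `π₁(M_T(b)) ↠ ℤ/2` with `φ(v₁) = 1`, `φ(v₂) = φ(h) = 0`
is the fundamental group of `M_T(2b)`. -/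
theorem ker_MT_cover (b : ℕ) (hb : 0 < b)
    (φ : PresentedGroup (relsT b) →* Multiplicative (ZMod 2))
    (h1 : φ (PresentedGroup.of 0) = Multiplicative.ofAdd 1)
    (h2 : φ (PresentedGroup.of 1) = 1) (h3 : φ (PresentedGroup.of 2) = 1) :
    Nonempty (φ.ker ≃* PresentedGroup (relsT (2 * b))) :=
  ker_MT_cover_general b φ h1 h2 h3
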